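/- Two nonempty convex subsets Ω₁ and Ω₂ of ℝⁿ can be properly separated if and only if ri(Ω₁) ∩ ri(Ω₂) = ∅. -/

import Mathlib

open Set Pointwise

section Generic

variable {E : Type*} [NormedAddCommGroup E] [NormedSpace ℝ E]

/-- Characterization of the intrinsic interior via open sets in the ambient space. -/
lemma mem_ri_iff' {s : Set E} {x : E} :
    x ∈ intrinsicInterior ℝ s ↔
      x ∈ affineSpan ℝ s ∧
        ∃ U : Set E, IsOpen U ∧ x ∈ U ∧ U ∩ (affineSpan ℝ s : Set E) ⊆ s := by
  constructor
  · intro h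
    rw [mem_intrinsicInterior] at h
    obtain ⟨y, hy, rfl⟩ := h
    refine ⟨y.2, ?_⟩
    obtain ⟨V, hVsub, hVopen, hyV⟩ := mem_interior.mp hy
    obtain ⟨U, hU, rfl⟩ := isOpen_induced_iff.mp hVopen
    refine ⟨U, hU, hyV, ?_⟩
    rintro z ⟨hzU, hzspan⟩
    exact hVsub (show (⟨z, hzspan⟩ : affineSpan ℝ s) ∈ _ from hzU)
  · rintro ⟨hxspan, U, hU, hxU, hUs⟩
    rw [mem_intrinsicInterior]
    refine ⟨⟨x, hxspan⟩, ?_, rfl⟩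
    exact mem_interior.mpr
      ⟨((↑) : affineSpan ℝ s → E) ⁻¹' U, fun z hz => hUs ⟨hz, z.2⟩,
        hU.preimage continuous_subtype_val, hxU⟩

/-- Prolongation principle: from a relative interior point one can move slightly
beyond, away from any other point of the set, while staying in the set. -/
lemma ri_prolong {s : Set E} {x w : E} (hx : x ∈ intrinsicInterior ℝ s) (hw : w ∈ s) :
    ∃ t : ℝ, 0 < t ∧ x + t • (x - w) ∈ s := by
  obtain ⟨hxspan, U, hU, hxU, hUs⟩ := mem_ri_iff'.mp hx
  have hwspan : w ∈ affineSpan ℝ s := subset_affineSpan ℝ s hw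
  have hcont : Continuous fun t : ℝ => x + t • (x - w) := by continuity
  have h0 : (fun t : ℝ => x + t • (x - w)) 0 = x := by simp
  have hev : (fun t : ℝ => x + t • (x - w)) ⁻¹' U ∈ nhds (0 : ℝ) :=
    hcont.continuousAt.preimage_mem_nhds (by simp only [zero_smul, add_zero]; exact hU.mem_nhds hxU)
  obtain ⟨ε, hε, hsub⟩ := Metric.mem_nhds_iff.mp hev
  refine ⟨ε / 2, by positivity, ?_⟩
  have hmem : (ε / 2 : ℝ) ∈ Metric.ball (0 : ℝ) ε := by
    simp only [Metric.mem_ball, Real.dist_eq, sub_zero]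
    rw [abs_of_pos (by positivity)]
    linarith
  have hUmem : x + (ε / 2) • (x - w) ∈ U := hsub hmem
  have hspanmem : x + (ε / 2) • (x - w) ∈ affineSpan ℝ s := by
    have heq : x + (ε / 2) • (x - w) = AffineMap.lineMap w x (1 + ε / 2) := by
      simp only [AffineMap.lineMap_apply, vsub_eq_sub, vadd_eq_add]
      module
    rw [heq]
    exact AffineMap.lineMap_mem _ hwspan hxspan
  exact hUs ⟨hUmem, hspanmem⟩

/-- Moving from a point of the set towards a relative interior point lands in the
relative interior. -/
lemma ri_segment {s : Set E} (hs : Convex ℝ s) {z x : E} (hz : z ∈ intrinsicInterior ℝ s)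
    (hx : x ∈ s) {t : ℝ} (ht0 : 0 < t) (ht1 : t ≤ 1) :
    x + t • (z - x) ∈ intrinsicInterior ℝ s := by
  obtain ⟨hzspan, U, hU, hzU, hUs⟩ := mem_ri_iff'.mp hz
  have hxspan : x ∈ affineSpan ℝ s := subset_affineSpan ℝ s hx
  rw [mem_ri_iff']
  constructor
  · have heq : x + t • (z - x) = AffineMap.lineMap x z t := by
      simp only [AffineMap.lineMap_apply, vsub_eq_sub, vadd_eq_add]
      module
    rw [heq]
    exact AffineMap.lineMap_mem _ hxspan hzspan
  · refine ⟨(fun w => x + t⁻¹ • (w - x)) ⁻¹' U, hU.preimage (continuous_const.add ((continuous_id.sub continuous_const).const_smul t⁻¹)), ?_, ?_⟩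
    · show x + t⁻¹ • (x + t • (z - x) - x) ∈ U
      rw [add_sub_cancel_left, smul_smul, inv_mul_cancel₀ ht0.ne', one_smul,
        add_sub_cancel]
      exact hzU
    · rintro w ⟨hwU, hwspan⟩
      have huspan : x + t⁻¹ • (w - x) ∈ affineSpan ℝ s := by
        have heq : x + t⁻¹ • (w - x) = AffineMap.lineMap x w t⁻¹ := by
          simp only [AffineMap.lineMap_apply, vsub_eq_sub, vadd_eq_add]
          module
        rw [heq]
        exact AffineMap.lineMap_mem _ hxspan hwspan
      have hus : x + t⁻¹ • (w - x) ∈ s := hUs ⟨hwU, huspan⟩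
      have hw : w = (1 - t) • x + t • (x + t⁻¹ • (w - x)) := by
        rw [smul_add, smul_smul, mul_inv_cancel₀ ht0.ne', one_smul]
        module
      rw [hw]
      exact hs hx hus (by linarith) ht0.le (by ring)

/-- The intrinsic interior of a convex set is convex. -/
lemma ri_convex {s : Set E} (hs : Convex ℝ s) : Convex ℝ (intrinsicInterior ℝ s) := by
  intro x hx y hy a b ha hb hab
  rcases eq_or_lt_of_le hb with hb0 | hb0
  · have ha1 : a = 1 := by linarith
    rw [← hb0, ha1]
    simpa using hx
  · have hxs : x ∈ s := intrinsicInterior_subset hx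
    have hmem := ri_segment hs hy hxs hb0 (by linarith)
    have heq : x + b • (y - x) = a • x + b • y := by
      have ha' : a = 1 - b := by linarith
      rw [ha']
      module
    rwa [heq] at hmem

/-- A one-dimensional limiting fact. -/
lemma real_limit {a d c : ℝ} (h : ∀ t ∈ Ioc (0 : ℝ) 1, a + t * d ≤ c) : a ≤ c := by
  have hcont : Continuous fun t : ℝ => a + t * d := by continuity
  have htend : Filter.Tendsto (fun t : ℝ => a + t * d) (nhdsWithin 0 (Ioi 0)) (nhds a) := by
    have := (hcont.tendsto 0).mono_left (nhdsWithin_le_nhds (s := Ioi (0:ℝ)))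
    simpa using this
  exact le_of_tendsto htend
    (Filter.eventually_of_mem (Ioc_mem_nhdsGT zero_lt_one) h)

end Generic

section InnerSec

variable {F : Type*} [NormedAddCommGroup F] [InnerProductSpace ℝ F]

/-- A linear inequality valid on the relative interior of a convex set extends
to the whole set. -/
lemma ri_inner_le [FiniteDimensional ℝ F] {s : Set F} (hs : Convex ℝ s) (v : F) (c : ℝ)
    (h : ∀ y ∈ intrinsicInterior ℝ s, (inner ℝ v y : ℝ) ≤ c) :
    ∀ x ∈ s, (inner ℝ v x : ℝ) ≤ c := by
  intro x hx
  obtain ⟨z, hz⟩ := Set.Nonempty.intrinsicInterior hs ⟨x, hx⟩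
  refine real_limit (d := (inner ℝ v z : ℝ) - inner ℝ v x) (fun t ht => ?_)
  have hmem := ri_segment hs hz hx ht.1 ht.2
  have := h _ hmem
  rwa [inner_add_right, real_inner_smul_right, inner_sub_right] at this

/-- Proper separation of a convex set from a point not in it. -/
lemma point_sep [FiniteDimensional ℝ F] {C : Set F} (hC : Convex ℝ C) (hne : C.Nonempty)
    (h0 : (0 : F) ∉ C) :
    ∃ v : F, (∀ x ∈ C, 0 ≤ (inner ℝ v x : ℝ)) ∧ ∃ x ∈ C, 0 < (inner ℝ v x : ℝ) := by
  by_cases hspan : (0 : F) ∈ affineSpan ℝ C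
  · -- 0 lies in the affine span; the span is a linear subspace.
    set V := (affineSpan ℝ C).direction with hV
    have hCV : ∀ x ∈ C, x ∈ V := fun x hx => by
      have := AffineSubspace.vsub_mem_direction (subset_affineSpan ℝ C hx) hspan
      simpa using this
    have hVspan : ∀ x : F, x ∈ V → x ∈ affineSpan ℝ C := fun x hx => by
      have := AffineSubspace.vadd_mem_of_mem_direction hx hspan
      simpa using this
    set D : Set V := ((↑) : V → F) ⁻¹' C with hD
    have hDconv : Convex ℝ D := hC.linear_preimage V.subtype
    obtain ⟨z, hz⟩ := Set.Nonempty.intrinsicInterior hC hne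
    have hzC : z ∈ C := intrinsicInterior_subset hz
    have hzV : z ∈ V := hCV z hzC
    obtain ⟨hzspan, U, hU, hzU, hUs⟩ := mem_ri_iff'.mp hz
    have hzint : (⟨z, hzV⟩ : V) ∈ interior D := by
      refine mem_interior.mpr ⟨((↑) : V → F) ⁻¹' U, ?_,
        hU.preimage continuous_subtype_val, hzU⟩
      rintro ⟨w, hwV⟩ hwU
      exact hUs ⟨hwU, hVspan w hwV⟩
    have h0D : (0 : V) ∉ interior D := fun h => h0 (by simpa [hD] using interior_subset h)
    obtain ⟨f, hf⟩ := geometric_hahn_banach_open_point hDconv.interior isOpen_interior h0D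
    have hext : ∀ x ∈ D, f x ≤ 0 := by
      intro x hx
      have := real_limit (a := f x) (d := f (⟨z, hzV⟩ : V) - f x) (c := 0) (fun t ht => by
        have hmem := hDconv.add_smul_sub_mem_interior hx hzint ht
        have hlt := hf _ hmem
        rw [map_zero] at hlt
        have heq : f (x + t • ((⟨z, hzV⟩ : V) - x)) = f x + t * (f ⟨z, hzV⟩ - f x) := by
          rw [map_add, map_smul, map_sub, smul_eq_mul]
        linarith [heq ▸ hlt])
      exact this
    set w := (InnerProductSpace.toDual ℝ V).symm f with hw
    have hwf : ∀ y : V, (inner ℝ w y : ℝ) = f y := fun y =>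
      InnerProductSpace.toDual_symm_apply
    refine ⟨-(w : F), fun x hx => ?_, z, hzC, ?_⟩
    · have hxV := hCV x hx
      have h1 : (inner ℝ (-(w : F)) x : ℝ) = -f ⟨x, hxV⟩ := by
        rw [inner_neg_left]
        congr 1
        rw [← hwf ⟨x, hxV⟩, Submodule.coe_inner]
      rw [h1]
      have := hext ⟨x, hxV⟩ hx
      linarith
    · have h1 : (inner ℝ (-(w : F)) z : ℝ) = -f ⟨z, hzV⟩ := by
        rw [inner_neg_left]
        congr 1
        rw [← hwf ⟨z, hzV⟩, Submodule.coe_inner]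
      rw [h1]
      have hlt := hf _ hzint
      rw [map_zero] at hlt
      linarith
  · -- 0 is not in the affine span: separate using the orthogonal projection.
    obtain ⟨p, hp⟩ := hne
    set W := (affineSpan ℝ C).direction with hW
    set v := p - (W.orthogonalProjection p : F) with hv
    have hvW : v ∈ Wᗮ := by rw [hv]; exact W.sub_starProjection_mem_orthogonal p
    have hvne : v ≠ 0 := by
      intro h
      apply hspan
      have hpW : p ∈ W := by
        have : p = (W.orthogonalProjection p : F) := by
          have := sub_eq_zero.mp (hv ▸ h)
          exact this
        rw [this]
        exact SetLike.coe_mem _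
      have h0eq : (0 : F) = (-p) +ᵥ p := by simp
      rw [h0eq]
      exact AffineSubspace.vadd_mem_of_mem_direction (W.neg_mem hpW)
        (subset_affineSpan ℝ C hp)
    have hkey : ∀ x ∈ C, (inner ℝ v x : ℝ) = ‖v‖ ^ 2 := by
      intro x hx
      have hxp : x - p ∈ W := by
        have := AffineSubspace.vsub_mem_direction (subset_affineSpan ℝ C hx)
          (subset_affineSpan ℝ C hp)
        simpa using this
      have h1 : (inner ℝ v (x - p) : ℝ) = 0 := by
        rw [real_inner_comm]
        exact (Submodule.mem_orthogonal W v).mp hvW _ hxp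
      have hprojW : ((W.orthogonalProjection p : F)) ∈ W := SetLike.coe_mem _
      have h2 : (inner ℝ v ((W.orthogonalProjection p : F)) : ℝ) = 0 := by
        rw [real_inner_comm]
        exact (Submodule.mem_orthogonal W v).mp hvW _ hprojW
      have hdecomp : x = v + (W.orthogonalProjection p : F) + (x - p) := by
        rw [hv]; abel
      rw [hdecomp, inner_add_right, inner_add_right, h1, h2,
        real_inner_self_eq_norm_sq]
      ring
    refine ⟨v, fun x hx => ?_, p, hp, ?_⟩
    · rw [hkey x hx]; positivity
    · rw [hkey p hp]
      have : 0 < ‖v‖ := norm_pos_iff.mpr hvne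
      positivity

end InnerSec

/-- Two nonempty convex sets in `ℝⁿ` can be properly separated iff their
relative interiors are disjoint. -/
theorem stmt_7 (n : ℕ) (Ω₁ Ω₂ : Set (EuclideanSpace ℝ (Fin n)))
    (h₁ : Ω₁.Nonempty) (h₂ : Ω₂.Nonempty) (hc₁ : Convex ℝ Ω₁) (hc₂ : Convex ℝ Ω₂) :
    (∃ v : EuclideanSpace ℝ (Fin n),
        (∀ w₁ ∈ Ω₁, ∀ w₂ ∈ Ω₂, (inner ℝ v w₁ : ℝ) ≤ inner ℝ v w₂) ∧
        (∃ w₁ ∈ Ω₁, ∃ w₂ ∈ Ω₂, (inner ℝ v w₁ : ℝ) < inner ℝ v w₂)) ↔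
      intrinsicInterior ℝ Ω₁ ∩ intrinsicInterior ℝ Ω₂ = ∅ := by
  constructor
  · rintro ⟨v, hle, w₁, hw₁, w₂, hw₂, hlt⟩
    rw [eq_empty_iff_forall_notMem]
    rintro x ⟨hx₁, hx₂⟩
    have hx₁' : x ∈ Ω₁ := intrinsicInterior_subset hx₁
    have hx₂' : x ∈ Ω₂ := intrinsicInterior_subset hx₂
    obtain ⟨t, ht, hts⟩ := ri_prolong hx₁ hw₁
    obtain ⟨u, hu, hus⟩ := ri_prolong hx₂ hw₂
    have h1 : (inner ℝ v (x + t • (x - w₁)) : ℝ) ≤ inner ℝ v x := hle _ hts _ hx₂'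
    have h2 : (inner ℝ v x : ℝ) ≤ inner ℝ v (x + u • (x - w₂)) := hle _ hx₁' _ hus
    rw [inner_add_right, real_inner_smul_right, inner_sub_right] at h1 h2
    have hA : (inner ℝ v x : ℝ) ≤ inner ℝ v w₁ := by nlinarith
    have hB : (inner ℝ v w₂ : ℝ) ≤ inner ℝ v x := by nlinarith
    linarith
  · intro hdisj
    have hAne : (intrinsicInterior ℝ Ω₁).Nonempty := Set.Nonempty.intrinsicInterior hc₁ h₁
    have hBne : (intrinsicInterior ℝ Ω₂).Nonempty := Set.Nonempty.intrinsicInterior hc₂ h₂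
    have hAconv : Convex ℝ (intrinsicInterior ℝ Ω₁) := ri_convex hc₁
    have hBconv : Convex ℝ (intrinsicInterior ℝ Ω₂) := ri_convex hc₂
    have hCconv : Convex ℝ (intrinsicInterior ℝ Ω₂ - intrinsicInterior ℝ Ω₁) :=
      hBconv.sub hAconv
    have hCne : (intrinsicInterior ℝ Ω₂ - intrinsicInterior ℝ Ω₁).Nonempty := by
      obtain ⟨a, ha⟩ := hAne
      obtain ⟨b, hb⟩ := hBne
      exact ⟨b - a, Set.sub_mem_sub hb ha⟩
    have h0C : (0 : EuclideanSpace ℝ (Fin n)) ∉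
        intrinsicInterior ℝ Ω₂ - intrinsicInterior ℝ Ω₁ := by
      intro h
      rw [Set.mem_sub] at h
      obtain ⟨b, hb, a, ha, hba⟩ := h
      have : b = a := by
        have := sub_eq_zero.mp hba
        exact this
      rw [eq_empty_iff_forall_notMem] at hdisj
      exact hdisj a ⟨ha, this ▸ hb⟩
    obtain ⟨v, hv, x₀, hx₀, hx₀pos⟩ := point_sep hCconv hCne h0C
    have hstep : ∀ a ∈ intrinsicInterior ℝ Ω₁, ∀ b ∈ intrinsicInterior ℝ Ω₂,
        (inner ℝ v a : ℝ) ≤ inner ℝ v b := by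
      intro a ha b hb
      have := hv _ (Set.sub_mem_sub hb ha)
      rw [inner_sub_right] at this
      linarith
    have hstep2 : ∀ w₁ ∈ Ω₁, ∀ b ∈ intrinsicInterior ℝ Ω₂,
        (inner ℝ v w₁ : ℝ) ≤ inner ℝ v b := fun w₁ hw₁ b hb =>
      ri_inner_le hc₁ v _ (fun a ha => hstep a ha b hb) w₁ hw₁
    have hstep3 : ∀ w₁ ∈ Ω₁, ∀ w₂ ∈ Ω₂, (inner ℝ v w₁ : ℝ) ≤ inner ℝ v w₂ := by
      intro w₁ hw₁ w₂ hw₂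
      have := ri_inner_le hc₂ (-v) (inner ℝ (-v) w₁) (fun b hb => by
        rw [inner_neg_left, inner_neg_left, neg_le_neg_iff]
        exact hstep2 w₁ hw₁ b hb) w₂ hw₂
      rw [inner_neg_left, inner_neg_left, neg_le_neg_iff] at this
      exact this
    rw [Set.mem_sub] at hx₀
    obtain ⟨b₀, hb₀, a₀, ha₀, hba₀⟩ := hx₀
    refine ⟨v, hstep3, a₀, intrinsicInterior_subset ha₀, b₀, intrinsicInterior_subset hb₀, ?_⟩
    rw [← hba₀, inner_sub_right] at hx₀pos
    linarith
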